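/- arXiv:2209.04985 — 8 statements merged into one kernel-verified Lean document; each statement's English description precedes it below -/
import Mathlib

section
/- Let V be an n-dimensional Chebyshev subspace of C([-1,1]) with basis (v_1,...,v_n), let x^1,...,x^m be distinct points of [-1,1], and let x ∈ [-1,1] with x ∉ {x^1,...,x^m}. Then for every index set S ⊆ {1,...,m} with |S| = n, the matrix M_S is invertible and every entry of the vector M_S^{-1} b(x) ∈ ℝ^n is nonzero. -/
/-- An `n`-dimensional subspace `V` of `C(X, ℝ)` is a Chebyshev space if for all
`n` distinct points and all prescribed values there is a unique interpolant in `V`. -/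
def IsChebyshev {X : Type*} [TopologicalSpace X] (n : ℕ) (V : Submodule ℝ C(X, ℝ)) : Prop :=
  Module.finrank ℝ V = n ∧
    ∀ ξ : Fin n → X, Function.Injective ξ → ∀ γ : Fin n → ℝ,
      ∃! v : C(X, ℝ), v ∈ V ∧ ∀ i, v (ξ i) = γ i

/-!
For the collocation matrix `M = (vⱼ(ξₗ))` of a family `v` spanning `V`, an equation
`M c = (φ(vⱼ))ⱼ` with `φ` a linear functional says that `∑ₗ cₗ δ_{ξₗ}` agrees with `φ` on every
`vⱼ`, hence on all of `V`. Test this against interpolants from the Chebyshev space `V`: for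
`φ = 0` the interpolant of `c` gives `∑ₗ cₗ² = 0`, so `M` is invertible; for `φ = δₓ`, if
`c_k = 0`, the interpolant equal to `1` at `x` and to `0` at the `ξₗ` with `l ≠ k` gives `1 = 0`.
-/

open Matrix Submodule

theorem Function.Injective.update_of_notMem_range {α β : Type*} [DecidableEq α] {f : α → β}
    (hf : Function.Injective f) {b : β} (hb : b ∉ Set.range f) (a : α) :
    Function.Injective (Function.update f a b) := by
  intro i j hij
  simp only [Function.update_apply] at hij
  split_ifs at hij with hi hj hj
  · exact hi.trans hj.symm
  · exact absurd ⟨j, hij.symm⟩ hb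
  · exact absurd ⟨i, hij⟩ hb
  · exact hf hij

namespace ContinuousMap

variable {X : Type*} [TopologicalSpace X]

def collocationMatrix {ι κ : Type*} (v : ι → C(X, ℝ)) (ξ : κ → X) : Matrix ι κ ℝ :=
  Matrix.of fun j l => v j (ξ l)

theorem sum_mul_apply_eq_of_mem_span {ι κ : Type*} [Fintype κ] {v : ι → C(X, ℝ)}
    {ξ : κ → X} {c : κ → ℝ} {φ : C(X, ℝ) →ₗ[ℝ] ℝ}
    (hc : collocationMatrix v ξ *ᵥ c = fun j => φ (v j))
    {w : C(X, ℝ)} (hw : w ∈ span ℝ (Set.range v)) :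
    ∑ l, c l * w (ξ l) = φ w := by
  let ψ : C(X, ℝ) →ₗ[ℝ] ℝ := ∑ l, c l • (evalCLM ℝ (ξ l) : C(X, ℝ) →L[ℝ] ℝ).toLinearMap
  have hψ : ∀ f : C(X, ℝ), ψ f = ∑ l, c l * f (ξ l) := by
    intro f
    simp [ψ]
  have hψv : Set.EqOn ψ φ (Set.range v) := by
    rintro _ ⟨j, rfl⟩
    rw [hψ, ← congrFun hc j]
    simp [collocationMatrix, mulVec, dotProduct, mul_comm]
  rw [← hψ]
  exact LinearMap.eqOn_span' hψv hw

end ContinuousMap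

namespace IsChebyshev

open ContinuousMap

variable {X : Type*} [TopologicalSpace X] {n : ℕ} {V : Submodule ℝ C(X, ℝ)}

theorem exists_interpolant (hV : IsChebyshev n V) {ξ : Fin n → X} (hξ : Function.Injective ξ)
    (γ : Fin n → ℝ) : ∃ w ∈ V, ∀ l, w (ξ l) = γ l :=
  (hV.2 ξ hξ γ).exists

variable {ι : Type*} {v : ι → C(X, ℝ)} {ξ : Fin n → X}

theorem mulVec_collocationMatrix_injective (hV : IsChebyshev n V)
    (hspan : V ≤ span ℝ (Set.range v)) (hξ : Function.Injective ξ) :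
    Function.Injective (collocationMatrix v ξ).mulVec := by
  rw [← coe_mulVecLin, injective_iff_map_eq_zero]
  intro c hc
  rw [mulVecLin_apply] at hc
  obtain ⟨w, hwV, hwc⟩ := hV.exists_interpolant hξ c
  have hsum : ∑ l, c l * c l = 0 := by
    simpa [hwc] using sum_mul_apply_eq_of_mem_span (φ := 0) (hc.trans rfl) (hspan hwV)
  funext l
  exact (Finset.sum_mul_self_eq_zero_iff _ c).mp hsum l (Finset.mem_univ l)

theorem apply_ne_zero_of_collocationMatrix_mulVec_eq (hV : IsChebyshev n V)
    (hspan : V ≤ span ℝ (Set.range v)) (hξ : Function.Injective ξ) {x : X}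
    (hx : x ∉ Set.range ξ) {c : Fin n → ℝ}
    (hc : collocationMatrix v ξ *ᵥ c = fun j => v j x) (k : Fin n) : c k ≠ 0 := by
  intro hk
  obtain ⟨w, hwV, hw⟩ :=
    hV.exists_interpolant (hξ.update_of_notMem_range hx k) (Pi.single k 1)
  have hwx : w x = 1 := by simpa using hw k
  have hterm : ∀ l, c l * w (ξ l) = 0 := by
    intro l
    rcases eq_or_ne l k with rfl | hl
    · rw [hk, zero_mul]
    · have hwl := hw l
      rw [Function.update_of_ne hl, Pi.single_eq_of_ne hl] at hwl
      rw [hwl, mul_zero]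
  have hsum := sum_mul_apply_eq_of_mem_span (φ := (evalCLM ℝ x : C(X, ℝ) →L[ℝ] ℝ).toLinearMap)
    hc (hspan hwV)
  rw [Finset.sum_eq_zero fun l _ => hterm l] at hsum
  exact zero_ne_one (hsum.trans hwx)

end IsChebyshev

theorem chebyshev_submatrix_invertible_and_entries_nonzero_general
    (n m : ℕ) (V : Submodule ℝ C(Set.Icc (-1 : ℝ) 1, ℝ))
    (hCheb : IsChebyshev n V)
    (v : Fin n → C(Set.Icc (-1 : ℝ) 1, ℝ))
    (hv_span : Submodule.span ℝ (Set.range v) = V)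
    (xpt : Fin m → Set.Icc (-1 : ℝ) 1) (hxpt : Function.Injective xpt)
    (x : Set.Icc (-1 : ℝ) 1) (hx : x ∉ Set.range xpt)
    (σ : Fin n → Fin m) (hσ : Function.Injective σ) :
    IsUnit (Matrix.of fun j l : Fin n => v j (xpt (σ l))) ∧
      ∀ j : Fin n,
        ((Matrix.of fun j l : Fin n => v j (xpt (σ l)))⁻¹.mulVec
            (fun j => v j x)) j ≠ 0 := by
  set M := ContinuousMap.collocationMatrix v (xpt ∘ σ)
  change IsUnit M ∧ ∀ j, (M⁻¹ *ᵥ fun j => v j x) j ≠ 0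
  have hξ : Function.Injective (xpt ∘ σ) := hxpt.comp hσ
  have hM : IsUnit M :=
    mulVec_injective_iff_isUnit.mp (hCheb.mulVec_collocationMatrix_injective hv_span.ge hξ)
  refine ⟨hM, hCheb.apply_ne_zero_of_collocationMatrix_mulVec_eq hv_span.ge hξ
    (fun ⟨l, hl⟩ => hx ⟨σ l, hl⟩) ?_⟩
  rw [mulVec_mulVec, mul_nonsing_inv _ ((isUnit_iff_isUnit_det _).mp hM), one_mulVec]

/-- for a Chebyshev space `V` with basis `v₁,…,vₙ`, distinct points
`x¹,…,xᵐ`, and `x` distinct from all of them, every `n × n` submatrix `M_S` of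
`M = (vⱼ(xⁱ))` is invertible and all entries of `M_S⁻¹ b(x)` are nonzero. -/
theorem chebyshev_submatrix_invertible_and_entries_nonzero
    (n m : ℕ) (V : Submodule ℝ C(Set.Icc (-1 : ℝ) 1, ℝ))
    (hCheb : IsChebyshev n V)
    (v : Fin n → C(Set.Icc (-1 : ℝ) 1, ℝ))
    (hv_mem : ∀ j, v j ∈ V)
    (hv_indep : LinearIndependent ℝ v)
    (hv_span : Submodule.span ℝ (Set.range v) = V)
    (xpt : Fin m → Set.Icc (-1 : ℝ) 1) (hxpt : Function.Injective xpt)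
    (x : Set.Icc (-1 : ℝ) 1) (hx : x ∉ Set.range xpt)
    (σ : Fin n → Fin m) (hσ : Function.Injective σ) :
    IsUnit (Matrix.of fun j l : Fin n => v j (xpt (σ l))) ∧
      ∀ j : Fin n,
        ((Matrix.of fun j l : Fin n => v j (xpt (σ l)))⁻¹.mulVec
            (fun j => v j x)) j ≠ 0 :=
  chebyshev_submatrix_invertible_and_entries_nonzero_general n m V hCheb v hv_span xpt hxpt x hx σ
    hσ
end

section
/- Let V be an n-dimensional Chebyshev subspace of C([-1,1]) with basis (v_1,...,v_n), let x^1,...,x^m be distinct points of [-1,1], let x ∈ [-1,1] with x ∉ {x^1,...,x^m}, and let S ⊆ {1,...,m} with |S| = n. The vector a^{(S)}(x) ∈ ℝ^m defined by a^{(S)}(x)_S = M_S^{-1} b(x) and a^{(S)}(x)_i = 0 for i ∉ S is a minimizer of ‖a‖₁ over all a ∈ ℝ^m subject to Ma = b(x) if and only if ‖M_{S^c}^T M_S^{-T} sgn(M_S^{-1} b(x))‖_∞ ≤ 1. -/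
/-!
Sufficiency is weak duality: for `y = M_S⁻ᵀ sgn(M_S⁻¹ b)` one has `‖a⁽ˢ⁾‖₁ = ⟨y, b⟩`, and
`⟨y, M a⟩ = ⟨Mᵀ y, a⟩ ≤ ‖a‖₁` for every feasible `a` once `‖Mᵀ y‖_∞ ≤ 1`; on `S` the entries of
`Mᵀ y` are signs anyway. Conversely, if `|(Mᵀ y)ᵢ| > 1` for some `i ∉ S`, put a small mass
`t = ε sgn (Mᵀ y)ᵢ` on coordinate `i` and compensate on `S` by `-t M_S⁻¹ Mᵢ`: the constraint still
holds and, as long as no entry of `M_S⁻¹ b` changes sign, the norm changes by `ε (1 - |(Mᵀ y)ᵢ|) < 0`.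
This needs every entry of `M_S⁻¹ b` to be nonzero. The Chebyshev property supplies this and the
invertibility of `M_S`: collocation determinants at distinct nodes do not vanish, and by Cramer's
rule each entry of `M_S⁻¹ b` is a quotient of two of them, `x` being distinct from all `xⁱ`.
-/

open Matrix

/-- The vector of `ℝ^m` supported on the image of `σ : Fin n → Fin m`
whose entry at `σ l` equals `c l`. -/
def sparseExt {n m : ℕ} (σ : Fin n → Fin m) (c : Fin n → ℝ) : Fin m → ℝ :=
  fun i => ∑ l, if i = σ l then c l else 0

open Function Filter Topology

lemma mul_sign_eq_abs (r : ℝ) : r * Real.sign r = |r| := by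
  rcases lt_trichotomy r 0 with h | rfl | h
  · rw [Real.sign_of_neg h, abs_of_neg h, mul_neg_one]
  · simp
  · rw [Real.sign_of_pos h, abs_of_pos h, mul_one]

lemma abs_sign_le_one (r : ℝ) : |Real.sign r| ≤ 1 := by
  rcases Real.sign_apply_eq r with h | h | h <;> simp [h]

lemma abs_sign_of_ne_zero {r : ℝ} (hr : r ≠ 0) : |Real.sign r| = 1 := by
  rcases Real.sign_apply_eq_of_ne_zero r hr with h | h <;> simp [h]

lemma abs_sub_eq_of_abs_lt {c δ : ℝ} (h : |δ| < |c|) : |c - δ| = |c| - δ * Real.sign c := by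
  obtain ⟨hlo, hhi⟩ := abs_lt.1 h
  rcases (abs_pos.1 ((abs_nonneg δ).trans_lt h)).lt_or_gt with hc | hc
  · rw [abs_of_neg hc] at hlo hhi ⊢
    rw [Real.sign_of_neg hc, abs_of_neg (by linarith)]
    ring
  · rw [abs_of_pos hc] at hlo hhi ⊢
    rw [Real.sign_of_pos hc, abs_of_pos (by linarith)]
    ring

section SparseExt

variable {n m : ℕ} {σ : Fin n → Fin m}

lemma sparseExt_apply_of_notMem_range (c : Fin n → ℝ) {i : Fin m} (hi : i ∉ Set.range σ) :
    sparseExt σ c i = 0 :=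
  Finset.sum_eq_zero fun l _ => if_neg fun h => hi ⟨l, h.symm⟩

lemma sparseExt_apply_of_injective (hσ : Injective σ) (c : Fin n → ℝ) (l : Fin n) :
    sparseExt σ c (σ l) = c l := by
  simp only [sparseExt, hσ.eq_iff, Finset.sum_ite_eq, Finset.mem_univ, if_true]

lemma sum_sparseExt (hσ : Injective σ) (g : Fin m → ℝ → ℝ) (hg : ∀ i, g i 0 = 0)
    (c : Fin n → ℝ) : ∑ i, g i (sparseExt σ c i) = ∑ l, g (σ l) (c l) :=
  (Fintype.sum_of_injective σ hσ _ _
    (fun i hi => by rw [sparseExt_apply_of_notMem_range c hi, hg])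
    (fun l => by rw [sparseExt_apply_of_injective hσ])).symm

lemma sum_abs_sparseExt (hσ : Injective σ) (c : Fin n → ℝ) :
    ∑ i, |sparseExt σ c i| = ∑ l, |c l| :=
  sum_sparseExt hσ (fun _ r => |r|) (fun _ => abs_zero) c

lemma mulVec_sparseExt {κ : Type*} (M : Matrix κ (Fin m) ℝ) (hσ : Injective σ)
    (c : Fin n → ℝ) : M *ᵥ sparseExt σ c = M.submatrix id σ *ᵥ c :=
  funext fun j => sum_sparseExt hσ (fun i r => M j i * r) (fun _ => mul_zero _) c

end SparseExt

def IsL1Minimizer {κ ι : Type*} [Fintype ι] (M : Matrix κ ι ℝ) (b : κ → ℝ) (a₀ : ι → ℝ) :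
    Prop :=
  M *ᵥ a₀ = b ∧ ∀ a, M *ᵥ a = b → ∑ i, |a₀ i| ≤ ∑ i, |a i|

section Duality

variable {κ ι : Type*} [Fintype κ] [Fintype ι]

lemma dotProduct_le_sum_abs (a w : ι → ℝ) (hw : ∀ i, |w i| ≤ 1) : a ⬝ᵥ w ≤ ∑ i, |a i| :=
  Finset.sum_le_sum fun i _ => calc
    a i * w i ≤ |a i| * |w i| := (le_abs_self _).trans (abs_mul _ _).le
    _ ≤ |a i| := mul_le_of_le_one_right (abs_nonneg _) (hw i)

lemma IsL1Minimizer.of_dual {M : Matrix κ ι ℝ} {b : κ → ℝ} {a₀ : ι → ℝ} (y : κ → ℝ)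
    (ha₀ : M *ᵥ a₀ = b) (hval : ∑ i, |a₀ i| = y ⬝ᵥ b) (hy : ∀ i, |(Mᵀ *ᵥ y) i| ≤ 1) :
    IsL1Minimizer M b a₀ := by
  refine ⟨ha₀, fun a ha => ?_⟩
  rw [hval, ← ha, ← dotProduct_transpose_mulVec]
  exact dotProduct_le_sum_abs a _ hy

end Duality

section Perturbation

variable {ι : Type*} [Fintype ι]

lemma sum_abs_add_single [DecidableEq ι] {a : ι → ℝ} {i₀ : ι} (ha : a i₀ = 0) (t : ℝ) :
    ∑ i, |(a + Pi.single i₀ t : ι → ℝ) i| = ∑ i, |a i| + |t| := by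
  rw [Fintype.sum_eq_add_sum_compl i₀, Fintype.sum_eq_add_sum_compl i₀ (fun i => |a i|)]
  have hrest : ∀ i ∈ ({i₀}ᶜ : Finset ι), |(a + Pi.single i₀ t : ι → ℝ) i| = |a i| := fun i hi => by
    rw [Pi.add_apply, Pi.single_eq_of_ne (by simpa using hi), add_zero]
  rw [Finset.sum_congr rfl hrest, Pi.add_apply, ha, Pi.single_eq_same]
  simp only [zero_add, abs_zero]
  ring

lemma sum_abs_sub_mul_of_abs_lt {c d : ι → ℝ} {t : ℝ} (h : ∀ l, |t * d l| < |c l|) :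
    ∑ l, |c l - t * d l| = ∑ l, |c l| - t * (d ⬝ᵥ fun l => Real.sign (c l)) := by
  simp only [abs_sub_eq_of_abs_lt (h _), Finset.sum_sub_distrib, dotProduct, Finset.mul_sum,
    mul_assoc]

lemma eventually_abs_mul_lt {c : ι → ℝ} (hc : ∀ l, c l ≠ 0) (d : ι → ℝ) :
    ∀ᶠ t in 𝓝 (0 : ℝ), ∀ l, |t * d l| < |c l| :=
  eventually_all.2 fun l =>
    ((continuous_id.mul continuous_const).abs.tendsto' 0 0 (by simp)).eventually_lt_const
      (abs_pos.2 (hc l))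

end Perturbation

lemma sum_abs_mulVec_eq_dotProduct {κ ι : Type*} [Fintype κ] [Fintype ι] (A : Matrix ι κ ℝ)
    (b : κ → ℝ) : ∑ l, |(A *ᵥ b) l| = (Aᵀ *ᵥ fun l => Real.sign ((A *ᵥ b) l)) ⬝ᵥ b := by
  rw [dotProduct_comm, dotProduct_transpose_mulVec]
  simp only [dotProduct, mul_comm (Real.sign _), mul_sign_eq_abs]

section SparseCertificate

variable {n m : ℕ} (M : Matrix (Fin n) (Fin m) ℝ) (b : Fin n → ℝ) {σ : Fin n → Fin m}

/-- `M_S⁻ᵀ sgn(M_S⁻¹ b)`, where `S` is the range of `σ`. -/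
noncomputable def signCertificate (σ : Fin n → Fin m) : Fin n → ℝ :=
  (M.submatrix id σ)⁻¹ᵀ *ᵥ fun l => Real.sign (((M.submatrix id σ)⁻¹ *ᵥ b) l)

lemma transpose_mulVec_signCertificate_apply (hB : IsUnit (M.submatrix id σ).det) (l : Fin n) :
    (Mᵀ *ᵥ signCertificate M b σ) (σ l) = Real.sign (((M.submatrix id σ)⁻¹ *ᵥ b) l) := by
  change ((M.submatrix id σ)ᵀ *ᵥ ((M.submatrix id σ)⁻¹ᵀ *ᵥ _)) l = _
  rw [mulVec_mulVec, ← transpose_mul, nonsing_inv_mul _ hB, transpose_one, one_mulVec]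

theorem isL1Minimizer_sparseExt_of_forall_notMem_range (hσ : Injective σ)
    (hB : IsUnit (M.submatrix id σ).det)
    (h : ∀ i ∉ Set.range σ, |(Mᵀ *ᵥ signCertificate M b σ) i| ≤ 1) :
    IsL1Minimizer M b (sparseExt σ ((M.submatrix id σ)⁻¹ *ᵥ b)) := by
  refine .of_dual (signCertificate M b σ) ?_ ?_ fun i => ?_
  · rw [mulVec_sparseExt M hσ, mulVec_mulVec, mul_nonsing_inv _ hB, one_mulVec]
  · rw [sum_abs_sparseExt hσ]
    exact sum_abs_mulVec_eq_dotProduct _ b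
  · by_cases hi : i ∈ Set.range σ
    · obtain ⟨l, rfl⟩ := hi
      rw [transpose_mulVec_signCertificate_apply M b hB]
      exact abs_sign_le_one _
    · exact h i hi

lemma mulVec_sparseExt_sub_add_single (hσ : Injective σ) (hB : IsUnit (M.submatrix id σ).det)
    (i₀ : Fin m) (t : ℝ) :
    M *ᵥ (sparseExt σ ((M.submatrix id σ)⁻¹ *ᵥ b - t • ((M.submatrix id σ)⁻¹ *ᵥ Mᵀ i₀)) +
      Pi.single i₀ t) = b := by
  rw [mulVec_add, mulVec_sparseExt M hσ, mulVec_sub, mulVec_smul, mulVec_mulVec, mulVec_mulVec,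
    mul_nonsing_inv _ hB, one_mulVec, one_mulVec]
  ext j
  simp [mulVec_single]

lemma dotProduct_sign_eq_transpose_mulVec_signCertificate (i₀ : Fin m) :
    ((M.submatrix id σ)⁻¹ *ᵥ Mᵀ i₀) ⬝ᵥ (fun l => Real.sign (((M.submatrix id σ)⁻¹ *ᵥ b) l)) =
      (Mᵀ *ᵥ signCertificate M b σ) i₀ := by
  rw [dotProduct_comm, ← dotProduct_transpose_mulVec]
  rfl

theorem abs_transpose_mulVec_signCertificate_le_one (hσ : Injective σ)
    (hB : IsUnit (M.submatrix id σ).det) (hc : ∀ l, ((M.submatrix id σ)⁻¹ *ᵥ b) l ≠ 0)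
    (hmin : IsL1Minimizer M b (sparseExt σ ((M.submatrix id σ)⁻¹ *ᵥ b)))
    {i₀ : Fin m} (hi₀ : i₀ ∉ Set.range σ) : |(Mᵀ *ᵥ signCertificate M b σ) i₀| ≤ 1 := by
  set c := (M.submatrix id σ)⁻¹ *ᵥ b
  set d := (M.submatrix id σ)⁻¹ *ᵥ Mᵀ i₀
  set q := (Mᵀ *ᵥ signCertificate M b σ) i₀
  by_contra! hq
  have hq0 : q ≠ 0 := fun h => by rw [h, abs_zero] at hq; linarith
  have hsmall : ∀ᶠ ε in 𝓝[>] 0, ∀ l, |ε * Real.sign q * d l| < |c l| :=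
    ((continuous_id.mul_const _).tendsto' 0 0 (zero_mul _)).mono_left nhdsWithin_le_nhds
      |>.eventually (eventually_abs_mul_lt hc d)
  obtain ⟨ε, hsmall, hε : 0 < ε⟩ := (hsmall.and self_mem_nhdsWithin).exists
  set t := ε * Real.sign q
  have hnorm : ∑ i, |(sparseExt σ (c - t • d) + Pi.single i₀ t : Fin m → ℝ) i| =
      ∑ l, |c l| - ε * |q| + ε := by
    rw [sum_abs_add_single (sparseExt_apply_of_notMem_range _ hi₀), sum_abs_sparseExt hσ]
    simp only [Pi.sub_apply, Pi.smul_apply, smul_eq_mul]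
    rw [sum_abs_sub_mul_of_abs_lt hsmall, dotProduct_sign_eq_transpose_mulVec_signCertificate,
      abs_mul, abs_sign_of_ne_zero hq0, abs_of_pos hε, mul_one, mul_assoc, mul_comm (Real.sign q),
      mul_sign_eq_abs]
  have hle := hmin.2 _ (mulVec_sparseExt_sub_add_single M b hσ hB i₀ t)
  rw [sum_abs_sparseExt hσ, hnorm] at hle
  nlinarith

theorem isL1Minimizer_sparseExt_iff (hσ : Injective σ) (hB : IsUnit (M.submatrix id σ).det)
    (hc : ∀ l, ((M.submatrix id σ)⁻¹ *ᵥ b) l ≠ 0) :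
    IsL1Minimizer M b (sparseExt σ ((M.submatrix id σ)⁻¹ *ᵥ b)) ↔
      ∀ i ∉ Set.range σ, |(Mᵀ *ᵥ signCertificate M b σ) i| ≤ 1 :=
  ⟨fun hmin _ hi => abs_transpose_mulVec_signCertificate_le_one M b hσ hB hc hmin hi,
    isL1Minimizer_sparseExt_of_forall_notMem_range M b hσ hB⟩

end SparseCertificate

lemma injective_update_of_notMem_range {X ι : Type*} [DecidableEq ι] {ξ : ι → X}
    (hξ : Injective ξ) {x : X} (hx : x ∉ Set.range ξ) (l : ι) : Injective (update ξ l x) := by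
  intro i k h
  by_cases hi : i = l <;> by_cases hk : k = l <;>
    simp only [hi, hk, update_self, update_of_ne, ne_eq, not_false_eq_true] at h
  · exact hi.trans hk.symm
  · exact absurd ⟨k, h.symm⟩ hx
  · exact absurd ⟨i, h⟩ hx
  · exact hξ h

section Chebyshev

variable {X : Type*} [TopologicalSpace X] {n : ℕ} {V : Submodule ℝ C(X, ℝ)}

def evalMatrix {κ ι : Type*} (v : κ → C(X, ℝ)) (ξ : ι → X) : Matrix κ ι ℝ :=
  of fun j i => v j (ξ i)

lemma evalMatrix_updateCol {κ ι : Type*} [DecidableEq ι] (v : κ → C(X, ℝ)) (ξ : ι → X)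
    (l : ι) (x : X) :
    (evalMatrix v ξ).updateCol l (fun j => v j x) = evalMatrix v (update ξ l x) := by
  ext j i
  rcases eq_or_ne i l with rfl | hi
  · simp [evalMatrix]
  · simp [evalMatrix, hi]

lemma IsChebyshev.eq_zero_of_forall_eq_zero (hV : IsChebyshev n V) {ξ : Fin n → X}
    (hξ : Injective ξ) {u : C(X, ℝ)} (hu : u ∈ V) (h0 : ∀ i, u (ξ i) = 0) : u = 0 :=
  (hV.2 ξ hξ 0).unique ⟨hu, h0⟩ ⟨V.zero_mem, fun _ => rfl⟩

lemma IsChebyshev.det_evalMatrix_ne_zero (hV : IsChebyshev n V) {v : Fin n → C(X, ℝ)}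
    (hv_mem : ∀ j, v j ∈ V) (hv_indep : LinearIndependent ℝ v) {ξ : Fin n → X}
    (hξ : Injective ξ) : (evalMatrix v ξ).det ≠ 0 := by
  intro h
  obtain ⟨w, hw, hwA⟩ := exists_vecMul_eq_zero_iff.2 h
  have hu : ∑ j, w j • v j = 0 :=
    hV.eq_zero_of_forall_eq_zero hξ (V.sum_mem fun j _ => V.smul_mem _ (hv_mem j)) fun i => by
      simpa [vecMul, dotProduct, evalMatrix] using congrFun hwA i
  exact hw (funext (Fintype.linearIndependent_iff.1 hv_indep w hu))

lemma IsChebyshev.inv_evalMatrix_mulVec_ne_zero (hV : IsChebyshev n V) {v : Fin n → C(X, ℝ)}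
    (hv_mem : ∀ j, v j ∈ V) (hv_indep : LinearIndependent ℝ v) {ξ : Fin n → X}
    (hξ : Injective ξ) {x : X} (hx : x ∉ Set.range ξ) (l : Fin n) :
    ((evalMatrix v ξ)⁻¹ *ᵥ fun j => v j x) l ≠ 0 := by
  rw [inv_def, Ring.inverse_eq_inv', smul_mulVec, ← cramer_eq_adjugate_mulVec, Pi.smul_apply,
    smul_eq_mul, cramer_apply, evalMatrix_updateCol]
  exact mul_ne_zero (inv_ne_zero (hV.det_evalMatrix_ne_zero hv_mem hv_indep hξ))
    (hV.det_evalMatrix_ne_zero hv_mem hv_indep (injective_update_of_notMem_range hξ hx l))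

end Chebyshev

theorem sparse_l1_minimizer_iff_general
    (n m : ℕ) (V : Submodule ℝ C(Set.Icc (-1 : ℝ) 1, ℝ))
    (hCheb : IsChebyshev n V)
    (v : Fin n → C(Set.Icc (-1 : ℝ) 1, ℝ))
    (hv_mem : ∀ j, v j ∈ V)
    (hv_indep : LinearIndependent ℝ v)
    (xpt : Fin m → Set.Icc (-1 : ℝ) 1) (hxpt : Function.Injective xpt)
    (x : Set.Icc (-1 : ℝ) 1) (hx : x ∉ Set.range xpt)
    (σ : Fin n → Fin m) (hσ : Function.Injective σ)
    -- `M`, `M_S` and `b(x)`: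
    (M : Matrix (Fin n) (Fin m) ℝ) (hM : ∀ j i, M j i = v j (xpt i))
    (MS : Matrix (Fin n) (Fin n) ℝ) (hMS : ∀ j l, MS j l = v j (xpt (σ l)))
    (b : Fin n → ℝ) (hb : ∀ j, b j = v j x) :
    (M.mulVec (sparseExt σ (MS⁻¹.mulVec b)) = b ∧
        ∀ a : Fin m → ℝ, M.mulVec a = b →
          ∑ i, |sparseExt σ (MS⁻¹.mulVec b) i| ≤ ∑ i, |a i|) ↔
      ∀ i : Fin m, i ∉ Set.range σ →
        |∑ j, M j i * ((MS⁻¹)ᵀ.mulVec fun l => Real.sign (MS⁻¹.mulVec b l)) j| ≤ 1 := by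
  have hξ : Injective (xpt ∘ σ) := hxpt.comp hσ
  have hMS_eval : MS = evalMatrix v (xpt ∘ σ) := by ext j l; simp [evalMatrix, hMS]
  have hb_eval : b = fun j => v j x := funext hb
  have hdet : IsUnit MS.det :=
    hMS_eval ▸ (hCheb.det_evalMatrix_ne_zero hv_mem hv_indep hξ).isUnit
  have hc : ∀ l, (MS⁻¹ *ᵥ b) l ≠ 0 := by
    rw [hMS_eval, hb_eval]
    exact hCheb.inv_evalMatrix_mulVec_ne_zero hv_mem hv_indep hξ fun ⟨l, hl⟩ => hx ⟨σ l, hl⟩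
  obtain rfl : MS = M.submatrix id σ := by ext j l; simp [hM, hMS]
  exact isL1Minimizer_sparseExt_iff M b hσ hdet hc

/-- characterization of optimality of the `n`-sparse vector
`a⁽ˢ⁾(x)` (supported on `S`, with `a⁽ˢ⁾(x)_S = M_S⁻¹ b(x)`) for the
`ℓ¹`-minimization program `min ‖a‖₁ s.t. Ma = b(x)`:
it is a minimizer iff `‖M_{Sᶜ}ᵀ M_S⁻ᵀ sgn(M_S⁻¹ b(x))‖_∞ ≤ 1`. -/
theorem sparse_l1_minimizer_iff
    (n m : ℕ) (V : Submodule ℝ C(Set.Icc (-1 : ℝ) 1, ℝ))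
    (hCheb : IsChebyshev n V)
    (v : Fin n → C(Set.Icc (-1 : ℝ) 1, ℝ))
    (hv_mem : ∀ j, v j ∈ V)
    (hv_indep : LinearIndependent ℝ v)
    (hv_span : Submodule.span ℝ (Set.range v) = V)
    (xpt : Fin m → Set.Icc (-1 : ℝ) 1) (hxpt : Function.Injective xpt)
    (x : Set.Icc (-1 : ℝ) 1) (hx : x ∉ Set.range xpt)
    (σ : Fin n → Fin m) (hσ : Function.Injective σ)
    -- `M`, `M_S` and `b(x)`:
    (M : Matrix (Fin n) (Fin m) ℝ) (hM : ∀ j i, M j i = v j (xpt i))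
    (MS : Matrix (Fin n) (Fin n) ℝ) (hMS : ∀ j l, MS j l = v j (xpt (σ l)))
    (b : Fin n → ℝ) (hb : ∀ j, b j = v j x) :
    (M.mulVec (sparseExt σ (MS⁻¹.mulVec b)) = b ∧
        ∀ a : Fin m → ℝ, M.mulVec a = b →
          ∑ i, |sparseExt σ (MS⁻¹.mulVec b) i| ≤ ∑ i, |a i|) ↔
      ∀ i : Fin m, i ∉ Set.range σ →
        |∑ j, M j i * ((MS⁻¹)ᵀ.mulVec fun l => Real.sign (MS⁻¹.mulVec b l)) j| ≤ 1 :=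
  sparse_l1_minimizer_iff_general n m V hCheb v hv_mem hv_indep xpt hxpt x hx σ hσ M hM MS hMS b hb
end

section
/- Let M ∈ ℝ^{n×m} and b ∈ ℝ^n be such that the affine set {a ∈ ℝ^m : Ma = b} is nonempty. Then the minimum of ‖a‖₁ over a ∈ ℝ^m subject to Ma = b is attained, and it is attained by some vector â having at most n nonzero entries. -/
/-!
The ℓ¹ norm is coercive, so it attains its minimum on the closed affine set `{a | M a = b}`;
take a minimizer `a` with the fewest nonzero entries. If it had more than `n` of them, the
columns of `M` on its support would be dependent, giving `h ≠ 0` in the kernel of `M`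
supported there. As long as `|t h i| ≤ |a i|` for all `i`, no coordinate of `a + t h` changes
sign, so `‖a + t h‖₁ + ‖a - t h‖₁ = 2 ‖a‖₁` and minimality forces `‖a + t h‖₁ = ‖a‖₁`. Taking
`t = -a j / h j` with `|a j / h j|` minimal kills the coordinate `j`, a contradiction.
-/

open Finset Filter Topology Matrix

theorem Matrix.exists_ne_zero_mulVec_eq_zero_of_card_lt {K κ ι : Type*} [Field K] [Fintype κ]
    [Fintype ι] (M : Matrix κ ι K) {S : Finset ι} (hS : Fintype.card κ < #S) :
    ∃ h : ι → K, h ≠ 0 ∧ (∀ i ∉ S, h i = 0) ∧ M *ᵥ h = 0 := by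
  classical
  have hdep : ¬LinearIndepOn K Mᵀ (S : Set ι) := fun hli => by
    have := hli.fintype_card_le_finrank
    simp only [Finset.coe_sort_coe, Fintype.card_coe, Module.finrank_fintype_fun_eq_card] at this
    omega
  obtain ⟨f, hf, j, hjS, hj⟩ := not_linearIndepOn_finset_iff.mp hdep
  refine ⟨fun i => if i ∈ S then f i else 0, Function.ne_iff.mpr ⟨j, by simpa [hjS]⟩,
    fun i hi => if_neg hi, ?_⟩
  ext k
  simpa [Matrix.mulVec, dotProduct, mul_comm, sum_apply] using congrFun hf k

section LinearOrderedField

variable {𝕜 κ ι : Type*} [Field 𝕜] [LinearOrder 𝕜] [IsStrictOrderedRing 𝕜]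

theorem abs_add_add_abs_sub_of_abs_le {x y : 𝕜} (h : |y| ≤ |x|) :
    |x + y| + |x - y| = 2 * |x| := by
  obtain ⟨hy₁, hy₂⟩ := abs_le.mp h
  rcases le_total 0 x with hx | hx
  · rw [abs_of_nonneg hx] at hy₁ hy₂ ⊢
    rw [abs_of_nonneg (by linarith), abs_of_nonneg (by linarith)]
    ring
  · rw [abs_of_nonpos hx] at hy₁ hy₂ ⊢
    rw [abs_of_nonpos (by linarith), abs_of_nonpos (by linarith)]
    ring

variable [Fintype ι]

theorem sum_abs_add_mul_eq_of_forall_le {a h : ι → 𝕜} {t : 𝕜}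
    (hmin : ∀ s, ∑ i, |a i| ≤ ∑ i, |a i + s * h i|) (ht : ∀ i, |t * h i| ≤ |a i|) :
    ∑ i, |a i + t * h i| = ∑ i, |a i| := by
  have hsum : ∑ i, |a i + t * h i| + ∑ i, |a i + -t * h i| = 2 * ∑ i, |a i| := by
    rw [← sum_add_distrib, mul_sum]
    refine sum_congr rfl fun i _ => ?_
    rw [neg_mul, ← sub_eq_add_neg]
    exact abs_add_add_abs_sub_of_abs_le (ht i)
  linarith [hmin t, hmin (-t)]

theorem exists_add_mul_eq_zero_and_forall_abs_mul_le {a h : ι → 𝕜} (hh : h ≠ 0)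
    (hsupp : ∀ i, a i = 0 → h i = 0) :
    ∃ t j, a j ≠ 0 ∧ a j + t * h j = 0 ∧ ∀ i, |t * h i| ≤ |a i| := by
  classical
  obtain ⟨j₀, hj₀⟩ := Function.ne_iff.mp hh
  obtain ⟨j, hj, hjmin⟩ := exists_min_image {i | h i ≠ 0} (fun i => |a i / h i|)
    ⟨j₀, by simpa using hj₀⟩
  rw [mem_filter_univ] at hj
  refine ⟨-(a j / h j), j, fun ha => hj (hsupp j ha), by field_simp; ring, fun i => ?_⟩
  by_cases hi : h i = 0
  · simp [hi]
  calc |-(a j / h j) * h i| = |a j / h j| * |h i| := by rw [abs_mul, abs_neg]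
    _ ≤ |a i / h i| * |h i| :=
        mul_le_mul_of_nonneg_right (hjmin i (by simpa using hi)) (abs_nonneg _)
    _ = |a i| := by rw [abs_div, div_mul_cancel₀ _ (abs_ne_zero.mpr hi)]

variable [Fintype κ]

def l1Minimizers (M : Matrix κ ι 𝕜) (b : κ → 𝕜) : Set (ι → 𝕜) :=
  {a | M *ᵥ a = b ∧ ∀ x, M *ᵥ x = b → ∑ i, |a i| ≤ ∑ i, |x i|}

theorem exists_mem_l1Minimizers_card_support_lt {M : Matrix κ ι 𝕜} {b : κ → 𝕜} {a : ι → 𝕜}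
    (ha : a ∈ l1Minimizers M b) (hcard : Fintype.card κ < #{i | a i ≠ 0}) :
    ∃ a' ∈ l1Minimizers M b, #{i | a' i ≠ 0} < #{i | a i ≠ 0} := by
  obtain ⟨hab, hamin⟩ := ha
  obtain ⟨h, hh, hsupp, hker⟩ := M.exists_ne_zero_mulVec_eq_zero_of_card_lt hcard
  have hline : ∀ t : 𝕜, M *ᵥ (a + t • h) = b := fun t => by
    rw [mulVec_add, mulVec_smul, hker, smul_zero, add_zero, hab]
  obtain ⟨t, j, haj, hj, ht⟩ := exists_add_mul_eq_zero_and_forall_abs_mul_le hh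
    fun i hi => hsupp i (by simpa using hi)
  have hnorm : ∑ i, |a i + t * h i| = ∑ i, |a i| :=
    sum_abs_add_mul_eq_of_forall_le (fun s => hamin _ (hline s)) ht
  refine ⟨a + t • h, ⟨hline t, fun x hx => ?_⟩, card_lt_card ?_⟩
  · simpa [hnorm] using hamin x hx
  · refine (ssubset_iff_of_subset fun i => ?_).mpr ⟨j, by simpa using haj, by simpa using hj⟩
    simp only [mem_filter_univ, Pi.add_apply, Pi.smul_apply, smul_eq_mul]
    exact mt fun hai => by simp [hai, hsupp i (by simpa using hai)]

end LinearOrderedField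

theorem pi_norm_le_sum_abs {ι : Type*} [Fintype ι] (x : ι → ℝ) : ‖x‖ ≤ ∑ i, |x i| :=
  (pi_norm_le_iff_of_nonneg (sum_nonneg fun i _ => abs_nonneg (x i))).mpr fun i =>
    single_le_sum (fun j _ => abs_nonneg (x j)) (mem_univ i)

theorem IsClosed.exists_isMinOn_sum_abs {ι : Type*} [Fintype ι] {F : Set (ι → ℝ)}
    (hF : IsClosed F) (hne : F.Nonempty) : ∃ a ∈ F, IsMinOn (fun x => ∑ i, |x i|) F a := by
  obtain ⟨x₀, hx₀⟩ := hne
  have hcoercive : Tendsto (fun x : ι → ℝ => ∑ i, |x i|) (cocompact _) atTop :=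
    tendsto_atTop_mono pi_norm_le_sum_abs tendsto_norm_cocompact_atTop
  exact (continuous_finsetSum _ fun i _ => (continuous_apply i).abs).continuousOn.exists_isMinOn'
    hF hx₀ ((hcoercive.eventually_ge_atTop _).filter_mono inf_le_left)

/-- if the affine set `{a : Ma = b}` is nonempty, then the `ℓ¹`-minimization
program `min ‖a‖₁ s.t. Ma = b` admits a minimizer `ahat` with at most `n` nonzero entries. -/
theorem exists_sparse_l1_minimizer
    (n m : ℕ) (M : Matrix (Fin n) (Fin m) ℝ) (b : Fin n → ℝ)
    (hfeas : ∃ a : Fin m → ℝ, M.mulVec a = b) :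
    ∃ ahat : Fin m → ℝ, M.mulVec ahat = b ∧
      (∀ a : Fin m → ℝ, M.mulVec a = b → ∑ i, |ahat i| ≤ ∑ i, |a i|) ∧
      (Finset.univ.filter fun i => ahat i ≠ 0).card ≤ n := by
  have hclosed : IsClosed {a : Fin m → ℝ | M *ᵥ a = b} :=
    isClosed_eq (continuous_const.matrix_mulVec continuous_id) continuous_const
  obtain ⟨a₀, ha₀, ha₀min⟩ := hclosed.exists_isMinOn_sum_abs hfeas
  have hne : (l1Minimizers M b).Nonempty := ⟨a₀, ha₀, fun x hx => ha₀min hx⟩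
  let sparsity : (Fin m → ℝ) → ℕ := fun a => #{i | a i ≠ 0}
  obtain ⟨hab, hamin⟩ := Function.argminOn_mem sparsity _ hne
  refine ⟨_, hab, hamin, not_lt.mp fun hlt => ?_⟩
  obtain ⟨a', ha', hlt'⟩ :=
    exists_mem_l1Minimizers_card_support_lt ⟨hab, hamin⟩ (by simpa using hlt)
  exact Function.not_lt_argminOn sparsity _ ha' hlt'
end

section
/- Let F be a real normed vector space, V a linear subspace of F, λ_1,...,λ_m bounded linear functionals on F with observation map Λ(f) = (λ_1(f),...,λ_m(f)) ∈ ℝ^m, Q : F → Z a bounded linear map into a real normed vector space Z, and ε > 0. Then for every (not necessarily linear) map Δ : ℝ^m → Z and every h ∈ F with Λ(h) = 0 and dist(h, V) > 0, one has sup { ‖Q(f) − Δ(Λ f)‖_Z : f ∈ F, dist(f, V) ≤ ε } ≥ ε · ‖Q(h)‖_Z / dist(h, V). -/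
/-!
The rescaled element `g = (ε / dist(h, V)) • h` and its negative both lie in the model set and
have the same (zero) observations, so `Δ` returns the same `b` on them. Since
`2 ‖Q g‖ ≤ ‖Q g - b‖ + ‖-Q g - b‖`, one of the two errors is at least `‖Q g‖ = ε ‖Q h‖ / dist(h, V)`.
-/

theorem Submodule.Quotient.norm_mk_eq_infDist {R E : Type*} [Ring R] [SeminormedAddCommGroup E]
    [Module R E] (V : Submodule R E) (x : E) :
    ‖(Submodule.Quotient.mk x : E ⧸ V)‖ = Metric.infDist x (V : Set E) :=
  QuotientAddGroup.norm_mk (S := V.toAddSubgroup) x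

theorem Submodule.infDist_smul {𝕜 E : Type*} [NormedField 𝕜] [SeminormedAddCommGroup E]
    [NormedSpace 𝕜 E] (V : Submodule 𝕜 E) (t : 𝕜) (x : E) :
    Metric.infDist (t • x) (V : Set E) = ‖t‖ * Metric.infDist x (V : Set E) := by
  simpa only [← Submodule.Quotient.mk_smul, Submodule.Quotient.norm_mk_eq_infDist] using
    norm_smul t (Submodule.Quotient.mk x : E ⧸ V)

theorem norm_le_max_norm_sub_norm_neg_sub {E : Type*} [SeminormedAddCommGroup E]
    [NormedSpace ℝ E] (a b : E) : ‖a‖ ≤ max ‖a - b‖ ‖-a - b‖ := by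
  have : 2 * ‖a‖ ≤ ‖a - b‖ + ‖-a - b‖ :=
    calc 2 * ‖a‖ = ‖(a - b) - (-a - b)‖ := by
          rw [sub_sub_sub_cancel_right, sub_neg_eq_add, ← two_smul ℝ, norm_smul, Real.norm_two]
      _ ≤ ‖a - b‖ + ‖-a - b‖ := norm_sub_le _ _
  rcases le_total ‖a - b‖ ‖-a - b‖ with h | h
  · exact le_max_of_le_right (by linarith)
  · exact le_max_of_le_left (by linarith)

theorem ofReal_norm_le_iSup_of_neg_mem {F Y Z : Type*} [Neg F] [SeminormedAddCommGroup Z]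
    [NormedSpace ℝ Z] (Q : F → Z) (obs : F → Y) (Δ : Y → Z) {K : Set F} {g : F}
    (hg : g ∈ K) (hng : -g ∈ K) (hQ : Q (-g) = -Q g) (hobs : obs (-g) = obs g) :
    ENNReal.ofReal ‖Q g‖ ≤ ⨆ f ∈ K, (‖Q f - Δ (obs f)‖₊ : ENNReal) := by
  have hle : ∀ f ∈ K, ENNReal.ofReal ‖Q f - Δ (obs f)‖ ≤ ⨆ f ∈ K, (‖Q f - Δ (obs f)‖₊ : ENNReal) :=
    fun f hf => by
      rw [ofReal_norm, enorm_eq_nnnorm]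
      exact le_iSup₂_of_le f hf le_rfl
  calc ENNReal.ofReal ‖Q g‖
      ≤ ENNReal.ofReal (max ‖Q g - Δ (obs g)‖ ‖Q (-g) - Δ (obs (-g))‖) := by
        rw [hQ, hobs]
        exact ENNReal.ofReal_le_ofReal (norm_le_max_norm_sub_norm_neg_sub _ _)
    _ = max (ENNReal.ofReal ‖Q g - Δ (obs g)‖) (ENNReal.ofReal ‖Q (-g) - Δ (obs (-g))‖) :=
        ENNReal.ofReal_max _ _
    _ ≤ _ := max_le (hle g hg) (hle (-g) hng)

/-- lower bound on the worst-case error of any recovery map `Δ` over the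
approximability set `{f : dist(f, V) ≤ ε}`, coming from any `h` in the kernel of the
observation map `Λ = (λ₁, …, λ_m)` with `dist(h, V) > 0`. The (possibly infinite)
supremum is taken in `ℝ≥0∞`. -/
theorem worst_case_error_lower_bound
    (F Z : Type*) [NormedAddCommGroup F] [NormedSpace ℝ F]
    [NormedAddCommGroup Z] [NormedSpace ℝ Z]
    (V : Submodule ℝ F) (m : ℕ) (lam : Fin m → F →L[ℝ] ℝ) (Q : F →L[ℝ] Z)
    (ε : ℝ) (hε : 0 < ε) (Δ : (Fin m → ℝ) → Z)
    (h : F) (hker : ∀ i, lam i h = 0) (hV : 0 < Metric.infDist h (V : Set F)) :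
    ENNReal.ofReal (ε * ‖Q h‖ / Metric.infDist h (V : Set F)) ≤
      ⨆ f ∈ {f : F | Metric.infDist f (V : Set F) ≤ ε},
        (‖Q f - Δ (fun i => lam i f)‖₊ : ENNReal) := by
  set d := Metric.infDist h (V : Set F)
  have hc : ‖ε / d‖ = ε / d := Real.norm_of_nonneg (div_nonneg hε.le hV.le)
  set g := (ε / d) • h
  have hg : Metric.infDist g (V : Set F) ≤ ε := by
    rw [Submodule.infDist_smul, hc, div_mul_cancel₀ _ hV.ne']
  have hng : Metric.infDist (-g) (V : Set F) ≤ ε := by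
    rwa [← neg_one_smul ℝ g, Submodule.infDist_smul, norm_neg, norm_one, one_mul]
  have hobs : (fun i => lam i (-g)) = fun i => lam i g := by
    funext i
    simp only [g, map_neg, map_smul, hker i, smul_zero, neg_zero]
  calc ENNReal.ofReal (ε * ‖Q h‖ / d) = ENNReal.ofReal ‖Q g‖ := by
        rw [map_smul, norm_smul, hc, mul_div_right_comm]
    _ ≤ _ := ofReal_norm_le_iSup_of_neg_mem Q (fun f i => lam i f) Δ hg hng (map_neg Q g) hobs
end

section
/- Let X be a compact Hausdorff space, V a finite-dimensional subspace of C(X), and x, x^1,...,x^m pairwise distinct points of X. Assume no nonzero v ∈ V satisfies v(x^1) = ... = v(x^m) = 0. Then min { ‖δ_x − Σ_{i=1}^m a_i δ_{x^i}‖_{C(X)*} : a ∈ ℝ^m, v(x) = Σ_{i=1}^m a_i v(x^i) for all v ∈ V } = sup { |h(x)| / dist(h, V) : h ∈ C(X), h ≠ 0, h(x^1) = ... = h(x^m) = 0 }, where the constraint set on the left is nonempty and the left-hand minimum is attained. -/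
/-!
For every exact rule `a`, the error functional `δ_x - ∑ aᵢ δ_{xⁱ}` kills `V` and agrees with
`δ_x` on `W = {h | h(xⁱ) = 0 ∀ i}`, so `|h x| ≤ ‖δ_x - ∑ aᵢ δ_{xⁱ}‖ · dist(h, V)` on `W`: the
supremum `M` is at most every such norm. Conversely `v + w ↦ w(x)` is well defined on `V + W`
and bounded by `M`, since `dist(w, V) ≤ ‖v + w‖`; a Hahn–Banach extension `Ψ` with `‖Ψ‖ ≤ M`
makes `δ_x - Ψ` vanish on `W = ⋂ ker δ_{xⁱ}`, so `Ψ` is itself the error functional of an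
exact rule.
-/

open Metric

theorem exists_forall_apply_eq_sum_of_iInf_ker_le_ker {𝕜 E ι : Type*} [Field 𝕜] [AddCommGroup E]
    [Module 𝕜 E] [Fintype ι] {ℓ : ι → E →ₗ[𝕜] 𝕜} {φ : E →ₗ[𝕜] 𝕜}
    (h : ⨅ i, LinearMap.ker (ℓ i) ≤ LinearMap.ker φ) :
    ∃ b : ι → 𝕜, ∀ e, φ e = ∑ i, b i * ℓ i e := by
  obtain ⟨b, rfl⟩ := (Submodule.mem_span_range_iff_exists_fun 𝕜).1 (mem_span_of_iInf_ker_le_ker h)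
  exact ⟨b, fun e => by simp⟩

theorem ContinuousLinearMap.norm_apply_le_norm_mul_infDist {𝕜 E F : Type*}
    [NontriviallyNormedField 𝕜] [SeminormedAddCommGroup E] [NormedSpace 𝕜 E]
    [SeminormedAddCommGroup F] [NormedSpace 𝕜 F] (φ : E →L[𝕜] F) {V : Submodule 𝕜 E}
    (hφ : ∀ v ∈ V, φ v = 0) (h : E) : ‖φ h‖ ≤ ‖φ‖ * infDist h V := by
  have : Nonempty (V : Set E) := ⟨⟨0, V.zero_mem⟩⟩
  rw [infDist_eq_iInf, Real.mul_iInf_of_nonneg (norm_nonneg φ)]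
  refine le_ciInf fun ⟨v, hv⟩ => ?_
  calc ‖φ h‖ = ‖φ (h - v)‖ := by rw [map_sub, hφ v hv, sub_zero]
    _ ≤ ‖φ‖ * dist h v := by rw [dist_eq_norm]; exact φ.le_opNorm _

theorem exists_extension_of_norm_le_mul_infDist {𝕜 E : Type*} [RCLike 𝕜]
    [SeminormedAddCommGroup E] [NormedSpace 𝕜 E] (V W : Submodule 𝕜 E) (f : W →ₗ[𝕜] 𝕜)
    {M : ℝ} (hM : 0 ≤ M) (hf : ∀ w : W, ‖f w‖ ≤ M * infDist (w : E) V) :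
    ∃ Ψ : E →L[𝕜] 𝕜, ‖Ψ‖ ≤ M ∧ (∀ v ∈ V, Ψ v = 0) ∧ ∀ w : W, Ψ w = f w := by
  have hfV : ∀ w : W, (w : E) ∈ V → f w = 0 := fun w hw => by
    simpa [infDist_zero_of_mem hw] using hf w
  let L := LinearPMap.sup ⟨V, 0⟩ ⟨W, f⟩ fun v w hvw => (hfV w (hvw ▸ v.2)).symm
  have hL : ∀ (v : V) (w : W) (z : L.domain), (v : E) + w = z → L z = f w := fun v w z hz => by
    simpa using LinearPMap.sup_apply _ v w z hz
  have hLM : ∀ z, ‖L z‖ ≤ M * ‖z‖ := by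
    rintro ⟨z, hz⟩
    obtain ⟨v, hv, w, hw, rfl⟩ := Submodule.mem_sup.1 hz
    rw [hL ⟨v, hv⟩ ⟨w, hw⟩ ⟨v + w, hz⟩ rfl]
    refine (hf _).trans (mul_le_mul_of_nonneg_left ?_ hM)
    calc infDist w V ≤ dist w (-v) := infDist_le_dist_of_mem (V.neg_mem hv)
      _ = ‖v + w‖ := by rw [dist_eq_norm, sub_neg_eq_add, add_comm]
  obtain ⟨Ψ, hΨ, hΨnorm⟩ := exists_extension_norm_eq L.domain (L.toFun.mkContinuous M hLM)
  refine ⟨Ψ, hΨnorm ▸ LinearMap.mkContinuous_norm_le _ hM _, fun v hv => ?_, fun w => ?_⟩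
  · simpa using (hΨ ⟨v, Submodule.mem_sup_left hv⟩).trans (hL ⟨v, hv⟩ 0 _ (add_zero _))
  · exact (hΨ ⟨w, Submodule.mem_sup_right w.2⟩).trans (hL 0 w _ (zero_add _))

section Quadrature

variable {X ι : Type*} [TopologicalSpace X] [Fintype ι]

noncomputable def quadratureError (x : X) (xpt : ι → X) (a : ι → ℝ) : C(X, ℝ) →L[ℝ] ℝ :=
  ContinuousMap.evalCLM ℝ x - ∑ i, a i • ContinuousMap.evalCLM ℝ (xpt i)

@[simp]
theorem quadratureError_apply (x : X) (xpt : ι → X) (a : ι → ℝ) (f : C(X, ℝ)) :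
    quadratureError x xpt a f = f x - ∑ i, a i * f (xpt i) := by
  simp [quadratureError]

def IsExactOn (V : Submodule ℝ C(X, ℝ)) (x : X) (xpt : ι → X) (a : ι → ℝ) : Prop :=
  ∀ v ∈ V, v x = ∑ i, a i * v (xpt i)

theorem isExactOn_iff {V : Submodule ℝ C(X, ℝ)} {x : X} {xpt : ι → X} {a : ι → ℝ} :
    IsExactOn V x xpt a ↔ ∀ v ∈ V, quadratureError x xpt a v = 0 := by
  simp only [IsExactOn, quadratureError_apply, sub_eq_zero]

variable {V : Submodule ℝ C(X, ℝ)} {x : X} {xpt : ι → X}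

theorem exists_isExactOn (hker : ∀ v ∈ V, (∀ i, v (xpt i) = 0) → v = 0) :
    ∃ a, IsExactOn V x xpt a := by
  obtain ⟨a, ha⟩ := exists_forall_apply_eq_sum_of_iInf_ker_le_ker
    (ℓ := fun i => (ContinuousMap.evalCLM ℝ (xpt i)).toLinearMap ∘ₗ V.subtype)
    (φ := (ContinuousMap.evalCLM ℝ x).toLinearMap ∘ₗ V.subtype) fun v hv => by
      simp only [Submodule.mem_iInf, LinearMap.mem_ker] at hv
      simp [hker v v.2 (by simpa using hv)]
  exact ⟨a, fun v hv => ha ⟨v, hv⟩⟩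

variable [CompactSpace X]

theorem IsExactOn.abs_apply_le_mul_infDist {a : ι → ℝ} (ha : IsExactOn V x xpt a)
    {h : C(X, ℝ)} (hh : ∀ i, h (xpt i) = 0) :
    |h x| ≤ ‖quadratureError x xpt a‖ * infDist h V := by
  simpa [hh] using (quadratureError x xpt a).norm_apply_le_norm_mul_infDist (isExactOn_iff.1 ha) h

theorem exists_isExactOn_norm_quadratureError_le {M : ℝ} (hM : 0 ≤ M)
    (hbound : ∀ h : C(X, ℝ), (∀ i, h (xpt i) = 0) → |h x| ≤ M * infDist h V) :
    ∃ b, IsExactOn V x xpt b ∧ ‖quadratureError x xpt b‖ ≤ M := by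
  let W := ⨅ i, LinearMap.ker (ContinuousMap.evalCLM ℝ (xpt i) : C(X, ℝ) →L[ℝ] ℝ).toLinearMap
  have hW : ∀ w : W, ∀ i, (w : C(X, ℝ)) (xpt i) = 0 := fun w i => (Submodule.mem_iInf _).1 w.2 i
  obtain ⟨Ψ, hΨM, hΨV, hΨW⟩ := exists_extension_of_norm_le_mul_infDist V W
    ((ContinuousMap.evalCLM ℝ x).toLinearMap ∘ₗ W.subtype) hM fun w => hbound w (hW w)
  obtain ⟨b, hb⟩ := exists_forall_apply_eq_sum_of_iInf_ker_le_ker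
    (φ := (ContinuousMap.evalCLM ℝ x - Ψ).toLinearMap) fun h hh => by
      simpa [sub_eq_zero] using (hΨW ⟨h, hh⟩).symm
  have hΨ : quadratureError x xpt b = Ψ := by
    ext f
    have hbf := hb f
    simp only [ContinuousLinearMap.toLinearMap_sub, LinearMap.sub_apply,
      ContinuousLinearMap.coe_coe, ContinuousMap.evalCLM_apply] at hbf
    simp only [quadratureError_apply]
    linarith
  exact ⟨b, isExactOn_iff.2 (hΨ ▸ hΨV), hΨ ▸ hΨM⟩

end Quadrature

theorem min_dual_norm_eq_sup_ratio_general
    (X : Type*) [TopologicalSpace X] [CompactSpace X]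
    (V : Submodule ℝ C(X, ℝ))
    (m : ℕ) (x : X) (xpt : Fin m → X)
    (hker : ∀ v ∈ V, (∀ i, v (xpt i) = 0) → v = 0) :
    ∃ a : Fin m → ℝ,
      (∀ v ∈ V, v x = ∑ i, a i * v (xpt i)) ∧
      (∀ a' : Fin m → ℝ, (∀ v ∈ V, v x = ∑ i, a' i * v (xpt i)) →
        ‖(ContinuousMap.evalCLM ℝ x -
            ∑ i, a i • ContinuousMap.evalCLM ℝ (xpt i) : C(X, ℝ) →L[ℝ] ℝ)‖ ≤
          ‖(ContinuousMap.evalCLM ℝ x -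
              ∑ i, a' i • ContinuousMap.evalCLM ℝ (xpt i) : C(X, ℝ) →L[ℝ] ℝ)‖) ∧
      ‖(ContinuousMap.evalCLM ℝ x -
          ∑ i, a i • ContinuousMap.evalCLM ℝ (xpt i) : C(X, ℝ) →L[ℝ] ℝ)‖ =
        sSup {t : ℝ | ∃ h : C(X, ℝ), h ≠ 0 ∧ (∀ i, h (xpt i) = 0) ∧
          t = |h x| / Metric.infDist h (V : Set C(X, ℝ))} := by
  set S := {t : ℝ | ∃ h : C(X, ℝ), h ≠ 0 ∧ (∀ i, h (xpt i) = 0) ∧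
    t = |h x| / infDist h (V : Set C(X, ℝ))}
  have hS_le : ∀ a, IsExactOn V x xpt a → ∀ t ∈ S, t ≤ ‖quadratureError x xpt a‖ := by
    rintro a ha _ ⟨h, -, hh, rfl⟩
    exact div_le_of_le_mul₀ infDist_nonneg (norm_nonneg (quadratureError x xpt a))
      (ha.abs_apply_le_mul_infDist hh)
  have hsSup_le a (ha : IsExactOn V x xpt a) : sSup S ≤ ‖quadratureError x xpt a‖ :=
    Real.sSup_le (hS_le a ha) (norm_nonneg (quadratureError x xpt a))
  obtain ⟨a₀, ha₀⟩ := exists_isExactOn (x := x) hker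
  have hbound (h : C(X, ℝ)) (hh : ∀ i, h (xpt i) = 0) :
      |h x| ≤ sSup S * infDist h (V : Set C(X, ℝ)) := by
    -- at `dist(h, V) = 0` the ratio is junk, but the exact rule `a₀` forces `h x = 0` there
    rcases (infDist_nonneg (x := h) (s := V)).eq_or_lt with hd | hd
    · simpa [← hd] using ha₀.abs_apply_le_mul_infDist hh
    · have hh₀ : h ≠ 0 := by rintro rfl; simp [infDist_zero_of_mem V.zero_mem] at hd
      exact (div_le_iff₀ hd).1 (le_csSup ⟨_, hS_le a₀ ha₀⟩ ⟨h, hh₀, hh, rfl⟩)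
  have hS_nonneg : 0 ≤ sSup S :=
    Real.sSup_nonneg <| by rintro _ ⟨h, -, -, rfl⟩; exact div_nonneg (abs_nonneg _) infDist_nonneg
  obtain ⟨b, hb, hbM⟩ := exists_isExactOn_norm_quadratureError_le hS_nonneg hbound
  exact ⟨b, hb, fun a ha => hbM.trans (hsSup_le a ha), le_antisymm hbM (hsSup_le b hb)⟩

/-- the minimum of `‖δ_x - ∑ᵢ aᵢ δ_{xⁱ}‖_{C(X)*}` over the vectors `a ∈ ℝ^m`
satisfying the exactness constraint on `V` is attained (the constraint set being nonempty),
and equals `sup { |h(x)| / dist(h, V) : h ≠ 0, h(x¹) = ⋯ = h(xᵐ) = 0 }`. -/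
theorem min_dual_norm_eq_sup_ratio
    (X : Type*) [TopologicalSpace X] [CompactSpace X] [T2Space X]
    (V : Submodule ℝ C(X, ℝ)) [FiniteDimensional ℝ V]
    (m : ℕ) (x : X) (xpt : Fin m → X)
    (hxpt : Function.Injective xpt) (hx : ∀ i, x ≠ xpt i)
    (hker : ∀ v ∈ V, (∀ i, v (xpt i) = 0) → v = 0) :
    ∃ a : Fin m → ℝ,
      (∀ v ∈ V, v x = ∑ i, a i * v (xpt i)) ∧
      (∀ a' : Fin m → ℝ, (∀ v ∈ V, v x = ∑ i, a' i * v (xpt i)) →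
        ‖(ContinuousMap.evalCLM ℝ x -
            ∑ i, a i • ContinuousMap.evalCLM ℝ (xpt i) : C(X, ℝ) →L[ℝ] ℝ)‖ ≤
          ‖(ContinuousMap.evalCLM ℝ x -
              ∑ i, a' i • ContinuousMap.evalCLM ℝ (xpt i) : C(X, ℝ) →L[ℝ] ℝ)‖) ∧
      ‖(ContinuousMap.evalCLM ℝ x -
          ∑ i, a i • ContinuousMap.evalCLM ℝ (xpt i) : C(X, ℝ) →L[ℝ] ℝ)‖ =
        sSup {t : ℝ | ∃ h : C(X, ℝ), h ≠ 0 ∧ (∀ i, h (xpt i) = 0) ∧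
          t = |h x| / Metric.infDist h (V : Set C(X, ℝ))} :=
  min_dual_norm_eq_sup_ratio_general X V m x xpt hker
end

section
/- Let M ∈ ℝ^{n×m} be a matrix of rank n (i.e., the linear map a ↦ Ma from ℝ^m to ℝ^n is surjective). Let (b_k) be a sequence in ℝ^n converging to b ∈ ℝ^n, and for each k let a_k ∈ ℝ^m be a minimizer of ‖a‖₁ subject to Ma = b_k. If the sequence (a_k) converges to ā ∈ ℝ^m, then ā is a minimizer of ‖a‖₁ subject to Ma = b. -/
/-!
The constraint `M ā = b` passes to the limit by continuity. For minimality, take any `a` with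
`M a = b`. By the open mapping theorem the perturbations `b_k - b` have preimages `c_k → 0`,
so `a + c_k` is feasible for `b_k` and `‖a_k‖₁ ≤ ‖a + c_k‖₁`; letting `k → ∞` gives
`‖ā‖₁ ≤ ‖a‖₁`.
-/

open Filter Topology

namespace ContinuousLinearMap

variable {𝕜 E F : Type*} [NontriviallyNormedField 𝕜]
  [NormedAddCommGroup E] [NormedSpace 𝕜 E] [CompleteSpace E]
  [NormedAddCommGroup F] [NormedSpace 𝕜 F] [CompleteSpace F]

theorem exists_tendsto_of_apply_eq {ι : Type*} {l : Filter ι} (L : E →L[𝕜] F)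
    (hL : Function.Surjective L) {bseq : ι → F} {b : F} (hb : Tendsto bseq l (𝓝 b))
    {a : E} (ha : L a = b) :
    ∃ aseq : ι → E, (∀ k, L (aseq k) = bseq k) ∧ Tendsto aseq l (𝓝 a) := by
  obtain ⟨C, -, hC⟩ := L.exists_preimage_norm_le hL
  choose g hgL hgC using hC
  have hg : Tendsto (fun k => g (bseq k - b)) l (𝓝 0) := by
    have hsub : Tendsto (fun k => bseq k - b) l (𝓝 0) := tendsto_sub_nhds_zero_iff.2 hb
    refine squeeze_zero_norm (fun k => hgC _) ?_
    simpa using hsub.norm.const_mul C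
  refine ⟨fun k => a + g (bseq k - b), fun k => ?_, by simpa using hg.const_add a⟩
  rw [map_add, hgL, ha, add_sub_cancel]

theorem isMinOn_preimage_of_tendsto {ι : Type*} {l : Filter ι} [l.NeBot] (L : E →L[𝕜] F)
    (hL : Function.Surjective L) {f : E → ℝ} (hf : Continuous f)
    {bseq : ι → F} {b : F} (hb : Tendsto bseq l (𝓝 b))
    {aseq : ι → E} {abar : E} (ha : Tendsto aseq l (𝓝 abar))
    (hfeas : ∀ k, L (aseq k) = bseq k) (hmin : ∀ k, IsMinOn f (L ⁻¹' {bseq k}) (aseq k)) :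
    L abar = b ∧ IsMinOn f (L ⁻¹' {b}) abar := by
  have hLabar : L abar = b :=
    tendsto_nhds_unique ((L.continuous.tendsto abar).comp ha) (by simpa [Function.comp_def, hfeas])
  refine ⟨hLabar, fun a (haL : L a = b) => ?_⟩
  obtain ⟨a', ha'L, ha'⟩ := L.exists_tendsto_of_apply_eq hL hb haL
  exact le_of_tendsto_of_tendsto' ((hf.tendsto abar).comp ha) ((hf.tendsto a).comp ha')
    fun k => hmin k (ha'L k)

end ContinuousLinearMap

/-- if `M` has full rank `n`, `b_k → b`, each `a_k` is an `ℓ¹`-minimizer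
subject to `M a = b_k`, and `a_k → ā`, then `ā` is an `ℓ¹`-minimizer subject to `M a = b`. -/
theorem limit_of_l1_minimizers_is_minimizer
    (n m : ℕ) (M : Matrix (Fin n) (Fin m) ℝ)
    (hrank : Function.Surjective M.mulVec)
    (bseq : ℕ → Fin n → ℝ) (b : Fin n → ℝ)
    (hb : Filter.Tendsto bseq Filter.atTop (nhds b))
    (aseq : ℕ → Fin m → ℝ)
    (haseq : ∀ k, M.mulVec (aseq k) = bseq k ∧
      ∀ a : Fin m → ℝ, M.mulVec a = bseq k → ∑ i, |aseq k i| ≤ ∑ i, |a i|)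
    (abar : Fin m → ℝ)
    (ha : Filter.Tendsto aseq Filter.atTop (nhds abar)) :
    M.mulVec abar = b ∧
      ∀ a : Fin m → ℝ, M.mulVec a = b → ∑ i, |abar i| ≤ ∑ i, |a i| := by
  let L : (Fin m → ℝ) →L[ℝ] Fin n → ℝ := LinearMap.toContinuousLinearMap M.mulVecLin
  have hl1 : Continuous fun v : Fin m → ℝ => ∑ i, |v i| := by fun_prop
  exact L.isMinOn_preimage_of_tendsto hrank hl1 hb ha (fun k => (haseq k).1)
    fun k a ha => (haseq k).2 a ha
end

section
/- Let V be an n-dimensional Chebyshev subspace of C([-1,1]) with n ≥ 3 that contains the constant functions, let x^1,...,x^m be distinct points of [-1,1] with m ≥ n, and let k ∈ {1,...,m}. Suppose ā ∈ ℝ^m is a minimizer of ‖a‖₁ subject to the constraint Σ_{i=1}^m a_i v(x^i) = v(x^k) for all v ∈ V, and that ā is supported on an index set S ⊆ {1,...,m} with |S| = n. Then k ∈ S and ā = e_k, the k-th standard basis vector of ℝ^m. -/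
open Finset

section Order

variable {α : Type*} [LinearOrder α]

theorem Finset.exists_gap_above (P : Finset α) (t : α) (h : 2 ≤ #{y ∈ P | t < y}) :
    ∃ u ∈ P, ∃ v ∈ P, t < u ∧ u < v ∧ ∀ w ∈ P, w ∉ Set.Ioo u v := by
  set A := {y ∈ P | t < y}
  have hA : A.Nonempty := card_pos.1 (by omega)
  set u := A.min' hA
  have hB : (A.erase u).Nonempty := by
    rw [← card_pos, card_erase_of_mem (min'_mem A hA)]; omega
  set v := (A.erase u).min' hB
  have hvB : v ∈ A.erase u := min'_mem _ hB
  have huA : u ∈ A := min'_mem A hA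
  obtain ⟨huP, htu⟩ := mem_filter.1 huA
  have huv : u < v := (min'_le A v (mem_of_mem_erase hvB)).lt_of_ne (ne_of_mem_erase hvB).symm
  refine ⟨u, huP, v, (mem_filter.1 (mem_of_mem_erase hvB)).1, htu, huv,
    fun w hw ⟨huw, hwv⟩ => ?_⟩
  have hwB : w ∈ A.erase u := mem_erase.2 ⟨huw.ne', mem_filter.2 ⟨hw, htu.trans huw⟩⟩
  exact (min'_le _ w hwB).not_gt hwv

theorem Finset.exists_gap_of_notMem (P : Finset α) (t : α) (ht : t ∉ P) (hP : 3 ≤ #P) :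
    ∃ u ∈ P, ∃ v ∈ P, u < v ∧ ∀ w ∈ insert t P, w ∉ Set.Ioo u v := by
  have hsplit : #{y ∈ P | t < y} + #{y ∈ P | y < t} = #P := by
    rw [← card_filter_add_card_filter_not (s := P) (t < ·)]
    congr 2
    exact filter_congr fun y hy => by
      rw [not_lt, le_iff_lt_or_eq, or_iff_left (ne_of_mem_of_not_mem hy ht)]
  by_cases habove : 2 ≤ #{y ∈ P | t < y}
  · obtain ⟨u, hu, v, hv, htu, huv, hgap⟩ := P.exists_gap_above t habove
    refine ⟨u, hu, v, hv, huv, fun w hw => ?_⟩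
    rcases mem_insert.1 hw with rfl | hw
    · exact fun h => htu.not_gt h.1
    · exact hgap w hw
  · -- the gap below `t` is a gap above `t` for the reversed order
    obtain ⟨u, hu, v, hv, hut, hvu, hgap⟩ := exists_gap_above (α := αᵒᵈ) P t
      (show 2 ≤ #{y ∈ P | y < t} by omega)
    refine ⟨v, hv, u, hu, hvu, fun w hw h => ?_⟩
    rcases mem_insert.1 hw with rfl | hw
    · exact hut.not_gt h.2
    · exact hgap w hw ⟨h.2, h.1⟩

end Order

theorem nonneg_of_sum_abs_le_sum {ι : Type*} {s : Finset ι} {a : ι → ℝ}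
    (h : ∑ i ∈ s, |a i| ≤ ∑ i ∈ s, a i) : ∀ i ∈ s, 0 ≤ a i := by
  intro i hi
  by_contra! hneg
  exact h.not_gt <| sum_lt_sum (fun j _ => le_abs_self (a j))
    ⟨i, hi, by rw [abs_of_neg hneg]; linarith⟩

theorem eq_indicator_of_apply_eq_one_of_sum_abs_le_one {ι : Type*} [Fintype ι] [DecidableEq ι]
    {a : ι → ℝ} {k : ι} (hk : a k = 1) (h : ∑ i, |a i| ≤ 1) :
    a = fun i => if i = k then 1 else 0 := by
  funext i
  split_ifs with hik
  · rw [hik, hk]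
  · have hpair := sum_le_sum_of_subset_of_nonneg (subset_univ {i, k})
      fun j _ _ => abs_nonneg (a j)
    rw [sum_pair hik, hk, abs_one] at hpair
    exact abs_nonpos_iff.1 (by linarith)

theorem exists_mem_card_eq_of_support {ι : Type*} [DecidableEq ι] {S : Finset ι} {a : ι → ℝ}
    {k : ι} (hsupp : ∀ i ∉ S, a i = 0) (h : k ∈ S ∨ ∃ j ∈ S, a j = 0) :
    ∃ F : Finset ι, k ∈ F ∧ #F = #S ∧ ∀ i ∉ F, a i = 0 := by
  by_cases hk : k ∈ S
  · exact ⟨S, hk, rfl, hsupp⟩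
  obtain ⟨j, hj, hj0⟩ := h.resolve_left hk
  refine ⟨insert k (S.erase j), mem_insert_self k _, ?_, fun i hi => ?_⟩
  · rw [card_insert_of_notMem fun h => hk (mem_of_mem_erase h), card_erase_of_mem hj]
    exact Nat.sub_add_cancel (card_pos.2 ⟨j, hj⟩)
  · by_cases hij : i = j
    · exact hij ▸ hj0
    · exact hsupp i fun hiS => hi (mem_insert_of_mem (mem_erase.2 ⟨hij, hiS⟩))

theorem sum_mul_congr_of_support_subset {ι : Type*} [Fintype ι] {S : Finset ι} {a f g : ι → ℝ}
    (hsupp : ∀ i ∉ S, a i = 0) (h : ∀ i ∈ S, f i = g i) :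
    ∑ i, a i * f i = ∑ i, a i * g i :=
  sum_congr rfl fun i _ => by by_cases hi : i ∈ S <;> simp [hi, hsupp, h]

theorem ContinuousMap.exists_mem_Ioo_eq_zero {lo hi : ℝ} (f : C(Set.Icc lo hi, ℝ))
    {x y : Set.Icc lo hi} (hxy : x ≤ y) (hx : 0 < f x) (hy : f y < 0) :
    ∃ z ∈ Set.Ioo x y, f z = 0 := by
  have hlohi : lo ≤ hi := x.2.1.trans x.2.2
  set g : ℝ → ℝ := fun r => f (Set.projIcc lo hi hlohi r)
  have hg : ∀ z : Set.Icc lo hi, g z = f z := fun z => by simp [g]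
  obtain ⟨r, ⟨hxr, hry⟩, hr⟩ := intermediate_value_Ioo' (f := g) hxy
    (f.continuous.comp continuous_projIcc).continuousOn (by simpa [hg] using And.intro hy hx)
  refine ⟨⟨r, x.2.1.trans hxr.le, hry.le.trans y.2.2⟩, ⟨hxr, hry⟩, ?_⟩
  rw [← hg]
  exact hr

namespace IsChebyshev

variable {X : Type*} [TopologicalSpace X] {n : ℕ} {V : Submodule ℝ C(X, ℝ)}

theorem exists_mem_eqOn (hV : IsChebyshev n V) {ι : Type*} {p : ι → X} {S : Finset ι}
    (hp : Set.InjOn p S) (hS : #S = n) (γ : ι → ℝ) : ∃ w ∈ V, ∀ i ∈ S, w (p i) = γ i := by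
  set e : Fin n ≃ S := (S.equivFinOfCardEq hS).symm
  have hξ : Function.Injective fun j => p (e j) := fun j j' h =>
    e.injective (Subtype.ext (hp (e j).2 (e j').2 h))
  obtain ⟨w, ⟨hwV, hw⟩, -⟩ := hV.2 _ hξ fun j => γ (e j)
  exact ⟨w, hwV, fun i hi => by simpa using hw (e.symm ⟨i, hi⟩)⟩

theorem eq_zero_of_card_le (hV : IsChebyshev n V) {w : C(X, ℝ)} (hw : w ∈ V) {Z : Finset X}
    (hZ : n ≤ #Z) (hwZ : ∀ x ∈ Z, w x = 0) : w = 0 := by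
  obtain ⟨Z', hZ'Z, hZ'⟩ := exists_subset_card_eq hZ
  set e : Fin n ≃ Z' := (Z'.equivFinOfCardEq hZ').symm
  obtain ⟨v, -, huniq⟩ := hV.2 _ (Subtype.val_injective.comp e.injective) 0
  exact (huniq w ⟨hw, fun j => hwZ _ (hZ'Z (e j).2)⟩).trans
    (huniq 0 ⟨V.zero_mem, fun _ => rfl⟩).symm

theorem apply_eq_one_of_forall_eval_eq_sum (hV : IsChebyshev n V) {ι : Type*} [Fintype ι]
    [DecidableEq ι] {p : ι → X} {F : Finset ι} (hp : Set.InjOn p F) (hF : #F = n) {k : ι}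
    (hk : k ∈ F) {a : ι → ℝ} (hsupp : ∀ i ∉ F, a i = 0)
    (hrepr : ∀ v ∈ V, v (p k) = ∑ i, a i * v (p i)) : a k = 1 := by
  obtain ⟨w, hwV, hw⟩ := hV.exists_mem_eqOn hp hF fun i => if i = k then 1 else 0
  have h := hrepr w hwV
  rw [hw k hk, sum_mul_congr_of_support_subset hsupp hw] at h
  simpa using h.symm

theorem not_forall_eval_eq_sum_of_pos {lo hi : ℝ} {V : Submodule ℝ C(Set.Icc lo hi, ℝ)}
    (hV : IsChebyshev n V) (hn : 3 ≤ n) {ι : Type*} [Fintype ι] [DecidableEq ι]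
    {p : ι → Set.Icc lo hi} {S : Finset ι} (hp : Set.InjOn p S) (hS : #S = n) {a : ι → ℝ}
    (hpos : ∀ i ∈ S, 0 < a i) (hsupp : ∀ i ∉ S, a i = 0) {x : Set.Icc lo hi}
    (hx : ∀ i ∈ S, p i ≠ x) : ¬ ∀ v ∈ V, v x = ∑ i, a i * v (p i) := by
  intro hrepr
  obtain ⟨u, hu, v, hv, huv, hgap⟩ := (S.image p).exists_gap_of_notMem x
    (by simpa using hx) (by rw [card_image_of_injOn hp]; omega)
  obtain ⟨i, hi, rfl⟩ := mem_image.1 hu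
  obtain ⟨j, hj, rfl⟩ := mem_image.1 hv
  have hij : i ≠ j := by rintro rfl; exact huv.false
  obtain ⟨w, hwV, hw⟩ := hV.exists_mem_eqOn hp hS
    fun l => (if l = i then a j else 0) - (if l = j then a i else 0)
  have hwi : w (p i) = a j := by simp [hw i hi, hij]
  have hwj : w (p j) = -a i := by simp [hw j hj, hij.symm]
  have hwx : w x = 0 := by
    rw [hrepr w hwV, sum_mul_congr_of_support_subset hsupp hw]
    simp [mul_sub, sum_sub_distrib, mul_comm]
  obtain ⟨z, hz, hwz⟩ := w.exists_mem_Ioo_eq_zero huv.le (hwi ▸ hpos j hj)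
    (by simpa [hwj] using hpos i hi)
  set Z := insert z (insert x (((S.erase i).erase j).image p))
  have hZ : #Z = n := by
    have hzx : z ≠ x := fun h => hgap x (mem_insert_self x _) (h ▸ hz)
    have hzS : ∀ l ∈ S, p l ≠ z := fun l hl h =>
      hgap (p l) (mem_insert_of_mem (mem_image_of_mem p hl)) (h ▸ hz)
    have hxS : x ∉ ((S.erase i).erase j).image p := by
      simpa using fun l _ _ hl => hx l hl
    rw [card_insert_of_notMem, card_insert_of_notMem hxS,
      card_image_of_injOn (hp.mono (by simp [Set.subset_def]; tauto)),
      card_erase_of_mem (mem_erase.2 ⟨hij.symm, hj⟩), card_erase_of_mem hi, hS]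
    · omega
    · simpa using ⟨hzx, fun l _ _ hl => hzS l hl⟩
  have hw0 := hV.eq_zero_of_card_le hwV hZ.ge fun y hy => by
    rcases mem_insert.1 hy with rfl | hy
    · exact hwz
    rcases mem_insert.1 hy with rfl | hy
    · exact hwx
    obtain ⟨l, hl, rfl⟩ := mem_image.1 hy
    simp only [mem_erase] at hl
    simp [hw l hl.2.2, hl.1, hl.2.1]
  exact (hpos j hj).ne' (hwi ▸ hw0 ▸ rfl)

end IsChebyshev

theorem sparse_minimizer_at_sample_point_is_ek_general
    (n m : ℕ) (hn : 3 ≤ n)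
    (V : Submodule ℝ C(Set.Icc (-1 : ℝ) 1, ℝ))
    (hCheb : IsChebyshev n V)
    (hconst : ∀ c : ℝ, ContinuousMap.const (Set.Icc (-1 : ℝ) 1) c ∈ V)
    (xpt : Fin m → Set.Icc (-1 : ℝ) 1) (hxpt : Function.Injective xpt)
    (k : Fin m) (abar : Fin m → ℝ)
    (hfeas : ∀ v ∈ V, v (xpt k) = ∑ i, abar i * v (xpt i))
    (hmin : ∀ a : Fin m → ℝ, (∀ v ∈ V, v (xpt k) = ∑ i, a i * v (xpt i)) →
      ∑ i, |abar i| ≤ ∑ i, |a i|)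
    (S : Finset (Fin m)) (hS : S.card = n)
    (hsupp : ∀ i ∉ S, abar i = 0) :
    k ∈ S ∧ abar = fun i => if i = k then 1 else 0 := by
  have hnorm : ∑ i, |abar i| ≤ 1 := by
    simpa [apply_ite] using hmin (fun i => if i = k then 1 else 0) fun v _ => by simp [ite_mul]
  have habar : abar = fun i => if i = k then 1 else 0 := by
    by_cases hpos : k ∉ S ∧ ∀ i ∈ S, abar i ≠ 0
    · have hsum : ∑ i, abar i = 1 := by simpa using (hfeas _ (hconst 1)).symm
      have hnonneg := nonneg_of_sum_abs_le_sum (hnorm.trans hsum.ge)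
      exact absurd hfeas <| hCheb.not_forall_eval_eq_sum_of_pos hn hxpt.injOn hS
        (fun i hi => (hnonneg i (mem_univ i)).lt_of_ne' (hpos.2 i hi)) hsupp
        fun i hi => hxpt.ne (ne_of_mem_of_not_mem hi hpos.1)
    · obtain ⟨F, hkF, hF, hsuppF⟩ := exists_mem_card_eq_of_support hsupp
        (by simpa [or_iff_not_imp_left] using hpos)
      exact eq_indicator_of_apply_eq_one_of_sum_abs_le_one
        (hCheb.apply_eq_one_of_forall_eval_eq_sum hxpt.injOn (hF.trans hS) hkF hsuppF hfeas) hnorm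
  exact ⟨by_contra fun hk => by simpa [habar] using hsupp k hk, habar⟩

/-- for a Chebyshev space `V` of dimension `n ≥ 3` containing the constants,
any `ℓ¹`-minimizer `ā` of the program with data `b(x^k)` that is supported on an index set
`S` of size `n` must satisfy `k ∈ S` and `ā = e_k`. -/
theorem sparse_minimizer_at_sample_point_is_ek
    (n m : ℕ) (hn : 3 ≤ n) (hm : n ≤ m)
    (V : Submodule ℝ C(Set.Icc (-1 : ℝ) 1, ℝ))
    (hCheb : IsChebyshev n V)
    (hconst : ∀ c : ℝ, ContinuousMap.const (Set.Icc (-1 : ℝ) 1) c ∈ V)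
    (xpt : Fin m → Set.Icc (-1 : ℝ) 1) (hxpt : Function.Injective xpt)
    (k : Fin m) (abar : Fin m → ℝ)
    (hfeas : ∀ v ∈ V, v (xpt k) = ∑ i, abar i * v (xpt i))
    (hmin : ∀ a : Fin m → ℝ, (∀ v ∈ V, v (xpt k) = ∑ i, a i * v (xpt i)) →
      ∑ i, |abar i| ≤ ∑ i, |a i|)
    (S : Finset (Fin m)) (hS : S.card = n)
    (hsupp : ∀ i ∉ S, abar i = 0) :
    k ∈ S ∧ abar = fun i => if i = k then 1 else 0 :=
  sparse_minimizer_at_sample_point_is_ek_general n m hn V hCheb hconst xpt hxpt k abar hfeas hmin S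
    hS hsupp
end

section
/- Let V be an n-dimensional Chebyshev subspace of C([-1,1]) with n ≥ 3, let ξ^1 < ξ^2 < ... < ξ^n be points of [-1,1], and for each i ∈ {1,...,n} let L_i be the unique element of V satisfying L_i(ξ^j) = δ_{i,j} for all j ∈ {1,...,n}. Then for every x ∈ [-1,1] with x ∉ {ξ^1,...,ξ^n}, the sequence (L_1(x),...,L_n(x)) does not keep a constant sign: there exist indices i and j with L_i(x) > 0 and L_j(x) < 0. -/
/-!
Write `D t = det (L i (t j))` for a tuple of nodes `t`. `D` is continuous, and the Chebyshev
property makes it nonzero at distinct nodes; increasing tuples form a connected set containing `ξ`,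
where `D ξ = 1`, so `D > 0` on every increasing tuple. Replacing the node `ξ c` by `x` turns the
collocation matrix into the identity with one column replaced, so `D (update ξ c x) = L c x`.
If `ξ (k-1) < x < ξ k`, then `x` can replace `ξ k` or `ξ (k-1)` without breaking the order,
giving a positive value, while replacing `ξ (k+1)` or `ξ (k-2)` (for `n ≥ 3` one of them
exists) gives a tuple sorted by one transposition, hence a negative value.
-/

open Function Set Topology

lemma convex_setOf_strictMono {ι : Type*} [PartialOrder ι] :
    Convex ℝ {u : ι → ℝ | StrictMono u} := by
  intro u (hu : StrictMono u) v (hv : StrictMono v) a b ha hb hab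
  rcases ha.eq_or_lt with rfl | ha
  · rw [zero_add] at hab
    simpa [hab] using hv
  · exact (hu.const_smul ha).add_monotone (hv.monotone.const_smul hb)

lemma isPreconnected_setOf_strictMono {ι : Type*} [PartialOrder ι] {s : Set ℝ}
    [s.OrdConnected] :
    IsPreconnected {t : ι → s | StrictMono t} := by
  have himage : Pi.map (fun _ => Subtype.val) '' {t : ι → s | StrictMono t} =
      {u | StrictMono u} ∩ univ.pi fun _ => s := by
    ext u
    constructor
    · rintro ⟨t, ht, rfl⟩
      exact ⟨(Subtype.strictMono_coe _).comp ht, fun i _ => (t i).2⟩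
    · rintro ⟨hu, hus⟩
      exact ⟨fun i => ⟨u i, hus i trivial⟩, fun a b h => hu h, rfl⟩
  rw [← (IsInducing.piMap fun _ => IsInducing.subtypeVal).isPreconnected_image, himage]
  exact (convex_setOf_strictMono.inter
    (convex_pi fun _ _ => OrdConnected.convex ‹_›)).isPreconnected

variable {X : Type*} [TopologicalSpace X] {n : ℕ}

def collocationMatrix (L : Fin n → C(X, ℝ)) (t : Fin n → X) : Matrix (Fin n) (Fin n) ℝ :=
  Matrix.of fun i j => L i (t j)

lemma continuous_det_collocationMatrix (L : Fin n → C(X, ℝ)) :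
    Continuous fun t => (collocationMatrix L t).det :=
  Continuous.matrix_det <| continuous_matrix fun i j => (L i).continuous.comp (continuous_apply j)

lemma det_collocationMatrix_comp_perm (L : Fin n → C(X, ℝ)) (t : Fin n → X)
    (σ : Equiv.Perm (Fin n)) :
    (collocationMatrix L (t ∘ σ)).det = σ.sign * (collocationMatrix L t).det :=
  Matrix.det_permute' σ (collocationMatrix L t)

lemma collocationMatrix_update (L : Fin n → C(X, ℝ)) (t : Fin n → X) (c : Fin n) (y : X) :
    collocationMatrix L (update t c y) = (collocationMatrix L t).updateCol c fun i => L i y := by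
  ext i j
  rcases eq_or_ne j c with rfl | hj <;> simp [collocationMatrix, *]

lemma Matrix.det_one_updateCol {R ι : Type*} [CommRing R] [Fintype ι] [DecidableEq ι]
    (c : ι) (v : ι → R) : ((1 : Matrix ι ι R).updateCol c v).det = v c := by
  rw [← Matrix.cramer_apply, Matrix.cramer_one]
  rfl

lemma linearIndependent_of_det_collocationMatrix_ne_zero {L : Fin n → C(X, ℝ)} {t : Fin n → X}
    (h : (collocationMatrix L t).det ≠ 0) : LinearIndependent ℝ L := by
  refine LinearIndependent.of_comp
    (LinearMap.pi fun j => (ContinuousMap.evalCLM ℝ (t j)).toLinearMap) ?_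
  exact Matrix.linearIndependent_rows_of_det_ne_zero h

namespace IsChebyshev

lemma eq_zero_of_forall_apply_eq_zero {V : Submodule ℝ C(X, ℝ)} (hV : IsChebyshev n V)
    {t : Fin n → X} (ht : Injective t) {v : C(X, ℝ)} (hv : v ∈ V) (hvt : ∀ j, v (t j) = 0) :
    v = 0 :=
  (hV.2 t ht 0).unique ⟨hv, hvt⟩ ⟨V.zero_mem, fun _ => rfl⟩

lemma det_collocationMatrix_ne_zero {V : Submodule ℝ C(X, ℝ)} (hV : IsChebyshev n V)
    {L : Fin n → C(X, ℝ)} (hLV : ∀ i, L i ∈ V) (hL : LinearIndependent ℝ L)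
    {t : Fin n → X} (ht : Injective t) :
    (collocationMatrix L t).det ≠ 0 := by
  intro h
  obtain ⟨c, hc, hcL⟩ := Matrix.exists_vecMul_eq_zero_iff.mpr h
  have hsum : ∑ i, c i • L i = 0 := by
    refine hV.eq_zero_of_forall_apply_eq_zero ht
      (V.sum_mem fun i _ => V.smul_mem _ (hLV i)) fun j => ?_
    simpa [collocationMatrix, Matrix.vecMul, dotProduct] using congr_fun hcL j
  exact hc (funext (Fintype.linearIndependent_iff.mp hL c hsum))

lemma det_collocationMatrix_pos {s : Set ℝ} [s.OrdConnected] {V : Submodule ℝ C(s, ℝ)}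
    (hV : IsChebyshev n V) {L : Fin n → C(s, ℝ)} (hLV : ∀ i, L i ∈ V)
    (hL : LinearIndependent ℝ L) {ξ t : Fin n → s} (hξ : StrictMono ξ)
    (hξL : 0 < (collocationMatrix L ξ).det) (ht : StrictMono t) :
    0 < (collocationMatrix L t).det := by
  by_contra! hle
  obtain ⟨u, hu, hu0⟩ := isPreconnected_setOf_strictMono.intermediate_value ht hξ
    (continuous_det_collocationMatrix L).continuousOn ⟨hle, hξL.le⟩
  exact hV.det_collocationMatrix_ne_zero hLV hL hu.injective hu0

end IsChebyshev

lemma Monotone.exists_forall_lt_iff_val_lt {α : Type*} [Preorder α] {ξ : Fin n → α}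
    (hξ : Monotone ξ) (x : α) : ∃ k ≤ n, ∀ j : Fin n, ξ j < x ↔ (j : ℕ) < k := by
  classical
  set S := Finset.univ.filter fun j => ξ j < x
  refine ⟨S.card, (Finset.card_le_univ S).trans (Fintype.card_fin n).le,
    fun j => ⟨fun hj => ?_, ?_⟩⟩
  · have : Finset.Iic j ⊆ S := fun i hi =>
      Finset.mem_filter.2 ⟨Finset.mem_univ i, (hξ (Finset.mem_Iic.1 hi)).trans_lt hj⟩
    simpa using Finset.card_le_card this
  · contrapose!
    intro hj
    have : S ⊆ Finset.Iio j := fun i hi => Finset.mem_Iio.2 <| lt_of_not_ge fun hji =>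
      hj ((hξ hji).trans_lt (Finset.mem_filter.1 hi).2)
    simpa using Finset.card_le_card this

lemma exists_strictMono_update_and_update_comp_swap {α : Type*} [LinearOrder α]
    (hn : 3 ≤ n) {ξ : Fin n → α} (hξ : StrictMono ξ) {x : α} (hx : x ∉ range ξ) :
    ∃ c c', c ≠ c' ∧ StrictMono (update ξ c x) ∧
      StrictMono (update ξ c' x ∘ Equiv.swap c c') := by
  obtain ⟨k, hkn, hk⟩ := hξ.monotone.exists_forall_lt_iff_val_lt x
  have hlt : ∀ j : Fin n, (j : ℕ) < k → ξ j < x := fun j => (hk j).2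
  have hgt : ∀ j : Fin n, k ≤ j → x < ξ j := fun j hj =>
    (lt_or_gt_of_ne fun h => hx ⟨j, h⟩).resolve_left fun h => by have := (hk j).1 h; omega
  have hmono : ∀ a b : Fin n, (a : ℕ) < b → ξ a < ξ b := fun a b h => hξ h
  suffices ∃ c c', c ≠ c' ∧ StrictMono (update ξ c x) ∧
      StrictMono (update (update ξ c' (ξ c)) c x) by
    obtain ⟨c, c', hcc', hc, hc'⟩ := this
    refine ⟨c, c', hcc', hc, ?_⟩
    rwa [Equiv.comp_swap_eq_update, update_self, update_of_ne hcc', update_idem]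
  -- `x` lies just below `ξ k`: slot `c` can take `x`, and `ξ c` then fits into slot `c'`.
  obtain ⟨c, c', hcc'⟩ : ∃ c c' : Fin n,
      (c : ℕ) = k ∧ (c' : ℕ) = k + 1 ∨ (c : ℕ) + 1 = k ∧ (c' : ℕ) + 2 = k := by
    rcases lt_or_ge (k + 1) n with h | h
    · exact ⟨⟨k, by omega⟩, ⟨k + 1, h⟩, .inl ⟨rfl, rfl⟩⟩
    · exact ⟨⟨k - 1, by omega⟩, ⟨k - 2, by omega⟩,
        .inr ⟨(by omega : k - 1 + 1 = k), (by omega : k - 2 + 2 = k)⟩⟩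
  refine ⟨c, c', by rw [Ne, Fin.ext_iff]; omega, ?_, ?_⟩ <;>
  · intro a b hab
    rw [Fin.lt_def] at hab
    simp only [update_apply, Fin.ext_iff]
    split_ifs <;> first
      | exact hgt _ (by omega) | exact hlt _ (by omega) | exact hmono _ _ (by omega)
      | (exfalso; omega)

/-- for a Chebyshev space of dimension `n ≥ 3` and ordered points
`ξ¹ < ⋯ < ξⁿ`, at any `x` outside `{ξ¹, …, ξⁿ}` the values of the fundamental Lagrange
interpolators `(L₁(x), …, Lₙ(x))` do not keep a constant sign. -/
theorem lagrange_values_change_sign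
    (n : ℕ) (hn : 3 ≤ n)
    (V : Submodule ℝ C(Set.Icc (-1 : ℝ) 1, ℝ))
    (hCheb : IsChebyshev n V)
    (ξ : Fin n → Set.Icc (-1 : ℝ) 1) (hξ : StrictMono ξ)
    (L : Fin n → C(Set.Icc (-1 : ℝ) 1, ℝ))
    (hL_mem : ∀ i, L i ∈ V)
    (hL_interp : ∀ i j, L i (ξ j) = if i = j then 1 else 0) :
    ∀ x : Set.Icc (-1 : ℝ) 1, x ∉ Set.range ξ →
      ∃ i j : Fin n, 0 < L i x ∧ L j x < 0 := by
  intro x hx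
  have hδ : collocationMatrix L ξ = 1 := Matrix.ext hL_interp
  have hdet : (collocationMatrix L ξ).det = 1 := by rw [hδ, Matrix.det_one]
  have hLi : LinearIndependent ℝ L :=
    linearIndependent_of_det_collocationMatrix_ne_zero (hdet ▸ one_ne_zero)
  have hpos : ∀ t, StrictMono t → 0 < (collocationMatrix L t).det := fun t ht =>
    hCheb.det_collocationMatrix_pos hL_mem hLi hξ (by rw [hdet]; exact one_pos) ht
  have hval : ∀ c, (collocationMatrix L (update ξ c x)).det = L c x := fun c => by
    rw [collocationMatrix_update, hδ, Matrix.det_one_updateCol]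
  obtain ⟨c, c', hcc', hc, hc'⟩ := exists_strictMono_update_and_update_comp_swap hn hξ hx
  refine ⟨c, c', hval c ▸ hpos _ hc, ?_⟩
  have hneg := hpos _ hc'
  rw [det_collocationMatrix_comp_perm, Equiv.Perm.sign_swap hcc', hval] at hneg
  simpa using hneg
end
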